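/- For every g = (M,(λ,μ,κ)) ∈ G^J with M = [[A,B],[C,D]], set P = ½((A+D)+i(B−C)), Q = ½((A−D)−i(B+C)), λ_* = ½(λ+iμ), μ_* = ½(λ−iμ). Then for every (W,η) ∈ 𝐃_{n,m} the matrix Q̄W+P̄ is invertible, the point g⋆(W,η) = ((PW+Q)(Q̄W+P̄)^(−1), (η+λ_*W+μ_*)(Q̄W+P̄)^(−1)) lies in 𝐃_{n,m}, and the action of G^J on 𝐇_{n,m} is compatible with this action through the partial Cayley transform: g·Φ_*(W,η) = Φ_*(g⋆(W,η)). -/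

import Mathlib

noncomputable section
open Matrix Complex

abbrev Mat (a b : ℕ) (R : Type) := Matrix (Fin a) (Fin b) R

def Jn (n : ℕ) : Matrix (Fin n ⊕ Fin n) (Fin n ⊕ Fin n) ℝ :=
  Matrix.fromBlocks 0 1 (-1) 0

def Sp (n : ℕ) : Set (Matrix (Fin n ⊕ Fin n) (Fin n ⊕ Fin n) ℝ) :=
  {M | Mᵀ * Jn n * M = Jn n}

def blkA {n : ℕ} (M : Matrix (Fin n ⊕ Fin n) (Fin n ⊕ Fin n) ℝ) : Mat n n ℂ :=
  (Matrix.toBlocks₁₁ M).map (Complex.ofReal)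
def blkB {n : ℕ} (M : Matrix (Fin n ⊕ Fin n) (Fin n ⊕ Fin n) ℝ) : Mat n n ℂ :=
  (Matrix.toBlocks₁₂ M).map (Complex.ofReal)
def blkC {n : ℕ} (M : Matrix (Fin n ⊕ Fin n) (Fin n ⊕ Fin n) ℝ) : Mat n n ℂ :=
  (Matrix.toBlocks₂₁ M).map (Complex.ofReal)
def blkD {n : ℕ} (M : Matrix (Fin n ⊕ Fin n) (Fin n ⊕ Fin n) ℝ) : Mat n n ℂ :=
  (Matrix.toBlocks₂₂ M).map (Complex.ofReal)

def SiegelH (n : ℕ) : Set (Mat n n ℂ) :=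
  {Ω | Ω.IsSymm ∧ (Ω.map Complex.im).PosDef}

def spAct {n : ℕ} (M : Matrix (Fin n ⊕ Fin n) (Fin n ⊕ Fin n) ℝ) (Ω : Mat n n ℂ) : Mat n n ℂ :=
  (blkA M * Ω + blkB M) * (blkC M * Ω + blkD M)⁻¹

/-- An element of the Jacobi group G^J = Sp(n,ℝ) ⋉ H_ℝ^(n,m):
a symplectic part together with (λ, μ, κ). -/
abbrev GJ (n m : ℕ) :=
  Matrix (Fin n ⊕ Fin n) (Fin n ⊕ Fin n) ℝ × Mat m n ℝ × Mat m n ℝ × Mat m m ℝ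

/-- The Siegel-Jacobi space 𝐇_{n,m} = 𝐇ₙ × ℂ^(m,n). -/
def HJ (n m : ℕ) : Set (Mat n n ℂ × Mat m n ℂ) := {p | p.1 ∈ SiegelH n}

/-- The action of G^J on 𝐇_{n,m}:
(M,(λ,μ,κ))·(Ω,Z) = (M∘Ω, (Z+λΩ+μ)(CΩ+D)⁻¹). -/
def jAct {n m : ℕ} (g : GJ n m) (p : Mat n n ℂ × Mat m n ℂ) :
    Mat n n ℂ × Mat m n ℂ :=
  (spAct g.1 p.1,
    (p.2 + g.2.1.map Complex.ofReal * p.1 + g.2.2.1.map Complex.ofReal) *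
      (blkC g.1 * p.1 + blkD g.1)⁻¹)
open scoped ComplexOrder

/-- Entrywise complex conjugate of a matrix. -/
def conjM {a b : ℕ} (W : Mat a b ℂ) : Mat a b ℂ := W.map (starRingEnd ℂ)

/-- The generalized unit disk 𝐃ₙ: symmetric W with Iₙ − WW̄ positive definite. -/
def SiegelD (n : ℕ) : Set (Mat n n ℂ) :=
  {W | W.IsSymm ∧ (1 - W * conjM W).PosDef}

/-- The Siegel-Jacobi disk 𝐃_{n,m} = 𝐃ₙ × ℂ^(m,n). -/
def DJ (n m : ℕ) : Set (Mat n n ℂ × Mat m n ℂ) := {p | p.1 ∈ SiegelD n}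

/-- The partial Cayley transform
Φ_*(W,η) = (i(Iₙ+W)(Iₙ−W)⁻¹, 2iη(Iₙ−W)⁻¹). -/
def cayley {n m : ℕ} (p : Mat n n ℂ × Mat m n ℂ) : Mat n n ℂ × Mat m n ℂ :=
  (Complex.I • ((1 + p.1) * (1 - p.1)⁻¹), (2 * Complex.I) • (p.2 * (1 - p.1)⁻¹))

/-- P = ½((A+D)+i(B−C)) for M = [[A,B],[C,D]] ∈ Sp(n,ℝ). -/
def Pm {n : ℕ} (M : Matrix (Fin n ⊕ Fin n) (Fin n ⊕ Fin n) ℝ) : Mat n n ℂ :=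
  (1/2 : ℂ) • ((M.toBlocks₁₁ + M.toBlocks₂₂).map Complex.ofReal
    + Complex.I • (M.toBlocks₁₂ - M.toBlocks₂₁).map Complex.ofReal)

/-- Q = ½((A−D)−i(B+C)) for M = [[A,B],[C,D]] ∈ Sp(n,ℝ). -/
def Qm {n : ℕ} (M : Matrix (Fin n ⊕ Fin n) (Fin n ⊕ Fin n) ℝ) : Mat n n ℂ :=
  (1/2 : ℂ) • ((M.toBlocks₁₁ - M.toBlocks₂₂).map Complex.ofReal
    - Complex.I • (M.toBlocks₁₂ + M.toBlocks₂₁).map Complex.ofReal)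

/-- λ_* = ½(λ+iμ). -/
def lamStar {a b : ℕ} (lam mu : Mat a b ℝ) : Mat a b ℂ :=
  (1/2 : ℂ) • (lam.map Complex.ofReal + Complex.I • mu.map Complex.ofReal)

/-- μ_* = ½(λ−iμ). -/
def muStar {a b : ℕ} (lam mu : Mat a b ℝ) : Mat a b ℂ :=
  (1/2 : ℂ) • (lam.map Complex.ofReal - Complex.I • mu.map Complex.ofReal)

/-- The action of g = (M,(λ,μ,κ)) ∈ G^J on the Siegel-Jacobi disk 𝐃_{n,m},
obtained from the action on 𝐇_{n,m} by transport through the partial Cayley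
transform:
g ⋆ (W,η) = ((PW+Q)(Q̄W+P̄)⁻¹, (η+λ_*W+μ_*)(Q̄W+P̄)⁻¹). -/
def jActD {n m : ℕ} (g : GJ n m) (p : Mat n n ℂ × Mat m n ℂ) :
    Mat n n ℂ × Mat m n ℂ :=
  ((Pm g.1 * p.1 + Qm g.1) * (conjM (Qm g.1) * p.1 + conjM (Pm g.1))⁻¹,
   (p.2 + lamStar g.2.1 g.2.2.1 * p.1 + muStar g.2.1 g.2.2.1) *
     (conjM (Qm g.1) * p.1 + conjM (Pm g.1))⁻¹)

/-!
Put `R = PW + Q` and `S = Q̄W + P̄`. The symplectic relations of `M` give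
`SᴴS - RᴴR = 1 - WᴴW` and, for symmetric `W`, `SᵀR = RᵀS`. Hence `S` is invertible, `W' = RS⁻¹`
is symmetric and `1 - W'ᴴW' = S⁻ᴴ(1 - WᴴW)S⁻¹` is positive definite, i.e. `W' ∈ 𝐃ₙ`.
For `Ω = i(1 + W)(1 - W)⁻¹` right multiplication by `1 - W` makes everything linear in `W`:
`(AΩ + B)(1 - W) = i(R + S)` and `(CΩ + D)(1 - W) = S - R`, so
`M∘Ω = i(R + S)(S - R)⁻¹ = i(1 + W')(1 - W')⁻¹`, and likewise for the second component.
-/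

section ConjM

variable {a b c : ℕ}

@[simp] lemma conjM_mul (X : Mat a b ℂ) (Y : Mat b c ℂ) :
    conjM (X * Y) = conjM X * conjM Y := by
  simp [conjM, Matrix.map_mul]

@[simp] lemma conjM_sub (X Y : Mat a b ℂ) : conjM (X - Y) = conjM X - conjM Y := by
  ext; simp [conjM]

@[simp] lemma conjM_one : conjM (1 : Mat a a ℂ) = 1 := by
  simp [conjM]

@[simp] lemma conjM_conjM (X : Mat a b ℂ) : conjM (conjM X) = X := by
  ext; simp [conjM]

lemma transpose_conjM (X : Mat a b ℂ) : (conjM X)ᵀ = Xᴴ := rfl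

lemma conjM_transpose (X : Mat a b ℂ) : conjM Xᵀ = Xᴴ := rfl

lemma conjTranspose_conjM (X : Mat a b ℂ) : (conjM X)ᴴ = Xᵀ := by
  ext; simp [conjM]

lemma conjM_conjTranspose (X : Mat a b ℂ) : conjM Xᴴ = Xᵀ := by
  ext; simp [conjM]

lemma Matrix.PosDef.conjM {X : Mat a a ℂ} (h : X.PosDef) : (_root_.conjM X).PosDef := by
  rw [← transpose_transpose (_root_.conjM X), transpose_conjM, h.1.eq]
  exact h.transpose

lemma posDef_conjM_iff {X : Mat a a ℂ} : (conjM X).PosDef ↔ X.PosDef :=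
  ⟨fun h ↦ by simpa using h.conjM, .conjM⟩

lemma mem_SiegelD_iff {W : Mat a a ℂ} : W ∈ SiegelD a ↔ W.IsSymm ∧ (1 - Wᴴ * W).PosDef := by
  refine and_congr_right fun hW ↦ ?_
  have : 1 - W * conjM W = conjM (1 - Wᴴ * W) := by
    rw [conjM_sub, conjM_one, conjM_mul, conjM_conjTranspose, hW.eq]
  rw [this, posDef_conjM_iff]

end ConjM

lemma Matrix.isUnit_one_sub_of_posDef_one_sub_conjTranspose_mul_self {ι K : Type*} [Fintype ι]
    [DecidableEq ι] [Field K] [PartialOrder K] [StarRing K] {W : Matrix ι ι K}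
    (hW : (1 - Wᴴ * W).PosDef) : IsUnit (1 - W) := by
  rw [← mulVec_injective_iff_isUnit]
  intro v w hvw
  by_contra hne
  have hfix : W *ᵥ (v - w) = v - w := by
    rw [sub_mulVec, one_mulVec, sub_mulVec, one_mulVec] at hvw
    rw [mulVec_sub]
    exact (sub_eq_sub_iff_sub_eq_sub.1 hvw).symm
  have := hW.dotProduct_mulVec_pos (sub_ne_zero.2 hne)
  rw [sub_mulVec, one_mulVec, ← mulVec_mulVec, hfix, dotProduct_sub, dotProduct_mulVec,
    ← star_mulVec, hfix, sub_self] at this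
  exact lt_irrefl _ this

section Fraction

variable {l ι K : Type*} [Fintype ι] [DecidableEq ι] [CommRing K] {R S : Matrix ι ι K}

lemma Matrix.mul_nonsing_inv_eq_of_mul_eq {X Z : Matrix l ι K} {Y U V : Matrix ι ι K}
    (hU : IsUnit U) (hX : X * U = Z) (hY : Y * U = V) : X * Y⁻¹ = Z * V⁻¹ := by
  rw [← hX, ← hY, mul_inv_rev, Matrix.mul_assoc, ← Matrix.mul_assoc U,
    mul_nonsing_inv U ((isUnit_iff_isUnit_det U).1 hU), Matrix.one_mul]

lemma Matrix.isSymm_mul_nonsing_inv (hS : IsUnit S) (h : Sᵀ * R = Rᵀ * S) :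
    (R * S⁻¹).IsSymm := by
  rw [isUnit_iff_isUnit_det] at hS
  calc (R * S⁻¹)ᵀ = Sᵀ⁻¹ * Rᵀ * S * S⁻¹ := by
        rw [transpose_mul, transpose_nonsing_inv, mul_nonsing_inv_cancel_right _ _ hS]
    _ = R * S⁻¹ := by
        rw [mul_assoc Sᵀ⁻¹, ← h, ← mul_assoc, nonsing_inv_mul _ (isUnit_det_transpose _ hS),
          one_mul]

lemma Matrix.one_sub_conjTranspose_mul_self_mul_nonsing_inv [StarRing K] (hS : IsUnit S) :
    1 - (R * S⁻¹)ᴴ * (R * S⁻¹) = (S⁻¹)ᴴ * (Sᴴ * S - Rᴴ * R) * S⁻¹ := by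
  rw [isUnit_iff_isUnit_det] at hS
  have hSh : IsUnit Sᴴ.det := by rw [det_conjTranspose]; exact hS.star
  rw [conjTranspose_mul, conjTranspose_nonsing_inv, mul_sub, sub_mul,
    nonsing_inv_mul_cancel_left _ _ hSh, mul_nonsing_inv _ hS]
  simp only [mul_assoc]

lemma Matrix.one_add_mul_inv_mul_one_sub_mul_inv (hS : IsUnit S) :
    (1 + R * S⁻¹) * (1 - R * S⁻¹)⁻¹ = (R + S) * (S - R)⁻¹ := by
  have hS' := (isUnit_iff_isUnit_det S).1 hS
  refine mul_nonsing_inv_eq_of_mul_eq hS ?_ ?_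
  · rw [add_mul, one_mul, nonsing_inv_mul_cancel_right _ _ hS', add_comm]
  · rw [sub_mul, one_mul, nonsing_inv_mul_cancel_right _ _ hS']

lemma Matrix.mul_inv_mul_one_sub_mul_inv (hS : IsUnit S) (E : Matrix l ι K) :
    (E * S⁻¹) * (1 - R * S⁻¹)⁻¹ = E * (S - R)⁻¹ := by
  have hS' := (isUnit_iff_isUnit_det S).1 hS
  refine mul_nonsing_inv_eq_of_mul_eq hS ?_ ?_
  · rw [nonsing_inv_mul_cancel_right _ _ hS']
  · rw [sub_mul, one_mul, nonsing_inv_mul_cancel_right _ _ hS']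

end Fraction

/-- Two of the block relations saying that `[[P, Q], [Q̄, P̄]]` preserves the Hermitian form
`diag(1, -1)`; the other two are their conjugates. -/
structure IsDiskPair {n : ℕ} (P Q : Mat n n ℂ) : Prop where
  transpose_mul_conjM : Pᵀ * conjM Q = Qᴴ * P
  transpose_mul_conjM_sub : Pᵀ * conjM P - Qᴴ * Q = 1

namespace IsDiskPair

variable {n : ℕ} {P Q W : Mat n n ℂ}

lemma conjTranspose_mul (h : IsDiskPair P Q) : Pᴴ * Q = Qᵀ * conjM P := by
  simpa [conjM_transpose, conjM_conjTranspose] using congrArg conjM h.transpose_mul_conjM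

lemma conjTranspose_mul_sub (h : IsDiskPair P Q) : Pᴴ * P - Qᵀ * conjM Q = 1 := by
  simpa [conjM_transpose, conjM_conjTranspose] using congrArg conjM h.transpose_mul_conjM_sub

lemma denom_conjTranspose_mul_self_sub (h : IsDiskPair P Q) :
    (conjM Q * W + conjM P)ᴴ * (conjM Q * W + conjM P) - (P * W + Q)ᴴ * (P * W + Q)
      = 1 - Wᴴ * W := by
  simp only [conjTranspose_add, Matrix.conjTranspose_mul, conjTranspose_conjM]
  calc _ = Wᴴ * (Qᵀ * conjM Q - Pᴴ * P) * W + Wᴴ * (Qᵀ * conjM P - Pᴴ * Q)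
        + (Pᵀ * conjM Q - Qᴴ * P) * W + (Pᵀ * conjM P - Qᴴ * Q) := by noncomm_ring
    _ = 1 - Wᴴ * W := by
      rw [h.transpose_mul_conjM, h.conjTranspose_mul, h.transpose_mul_conjM_sub, ← neg_sub,
        h.conjTranspose_mul_sub]
      noncomm_ring

lemma denom_transpose_mul_comm (h : IsDiskPair P Q) (hW : W.IsSymm) :
    (conjM Q * W + conjM P)ᵀ * (P * W + Q) = (P * W + Q)ᵀ * (conjM Q * W + conjM P) := by
  rw [← sub_eq_zero]
  simp only [transpose_add, transpose_mul, transpose_conjM, hW.eq]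
  calc _ = W * (Qᴴ * P - Pᵀ * conjM Q) * W + (Pᴴ * P - Qᵀ * conjM Q) * W
        - W * (Pᵀ * conjM P - Qᴴ * Q) + (Pᴴ * Q - Qᵀ * conjM P) := by noncomm_ring
    _ = 0 := by
      rw [h.transpose_mul_conjM, h.conjTranspose_mul, h.transpose_mul_conjM_sub,
        h.conjTranspose_mul_sub]
      noncomm_ring

lemma isUnit_denom (h : IsDiskPair P Q) (hW : (1 - Wᴴ * W).PosDef) :
    IsUnit (conjM Q * W + conjM P) := by
  have hSS : ((conjM Q * W + conjM P)ᴴ * (conjM Q * W + conjM P)).PosDef := by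
    rw [← sub_add_cancel (_ᴴ * _) ((P * W + Q)ᴴ * (P * W + Q)), h.denom_conjTranspose_mul_self_sub]
    exact hW.add_posSemidef (posSemidef_conjTranspose_mul_self _)
  exact isUnit_of_mul_isUnit_right hSS.isUnit

lemma mobius_mem_SiegelD (h : IsDiskPair P Q) (hW : W ∈ SiegelD n) :
    (P * W + Q) * (conjM Q * W + conjM P)⁻¹ ∈ SiegelD n := by
  obtain ⟨hWs, hWpos⟩ := mem_SiegelD_iff.1 hW
  have hS := h.isUnit_denom hWpos
  refine mem_SiegelD_iff.2 ⟨isSymm_mul_nonsing_inv hS (h.denom_transpose_mul_comm hWs), ?_⟩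
  rw [one_sub_conjTranspose_mul_self_mul_nonsing_inv hS, h.denom_conjTranspose_mul_self_sub]
  exact hWpos.conjTranspose_mul_mul_same (mulVec_injective_of_isUnit (isUnit_nonsing_inv_iff.2 hS))

end IsDiskPair

section Symplectic

variable {n : ℕ} {M : Matrix (Fin n ⊕ Fin n) (Fin n ⊕ Fin n) ℝ}

lemma blk_rels_of_mem_Sp (hM : M ∈ Sp n) :
    (blkA M)ᵀ * blkC M = (blkC M)ᵀ * blkA M ∧
    (blkB M)ᵀ * blkD M = (blkD M)ᵀ * blkB M ∧
    (blkA M)ᵀ * blkD M = 1 + (blkC M)ᵀ * blkB M ∧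
    (blkD M)ᵀ * blkA M = 1 + (blkB M)ᵀ * blkC M := by
  have h : Mᵀ * Jn n * M = Jn n := hM
  rw [← fromBlocks_toBlocks M, Jn, fromBlocks_transpose, fromBlocks_multiply,
    fromBlocks_multiply] at h
  simp only [Matrix.mul_zero, Matrix.mul_one, Matrix.mul_neg, Matrix.neg_mul, add_zero, zero_add,
    fromBlocks_inj] at h
  obtain ⟨h₁₁, h₁₂, h₂₁, h₂₂⟩ := h
  apply_fun Complex.ofRealHom.mapMatrix at h₁₁ h₁₂ h₂₁ h₂₂
  have hof : ⇑Complex.ofRealHom = Complex.ofReal := rfl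
  simp only [map_add, map_neg, map_mul, map_one, map_zero, RingHom.mapMatrix_apply, hof,
    transpose_map] at h₁₁ h₁₂ h₂₁ h₂₂
  simp only [blkA, blkB, blkC, blkD]
  refine ⟨?_, ?_, ?_, ?_⟩
  · linear_combination (norm := abel) h₁₁
  · linear_combination (norm := abel) h₂₂
  · linear_combination (norm := abel) h₁₂
  · linear_combination (norm := abel) -h₂₁

lemma Pm_eq :
    Pm M = (1 / 2 : ℂ) • (blkA M + blkD M + I • (blkB M - blkC M)) := by
  ext; simp [Pm, blkA, blkB, blkC, blkD]

lemma Qm_eq :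
    Qm M = (1 / 2 : ℂ) • (blkA M - blkD M - I • (blkB M + blkC M)) := by
  ext; simp [Qm, blkA, blkB, blkC, blkD, mul_add]

lemma conjM_Pm_eq :
    conjM (Pm M) = (1 / 2 : ℂ) • (blkA M + blkD M - I • (blkB M - blkC M)) := by
  ext; simp [conjM, Pm, blkA, blkB, blkC, blkD, map_ofNat]; ring

lemma conjM_Qm_eq :
    conjM (Qm M) = (1 / 2 : ℂ) • (blkA M - blkD M + I • (blkB M + blkC M)) := by
  ext; simp [conjM, Qm, blkA, blkB, blkC, blkD, map_ofNat]; ring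

lemma isDiskPair_Pm_Qm (hM : M ∈ Sp n) : IsDiskPair (Pm M) (Qm M) := by
  obtain ⟨hAC, hBD, hAD, hDA⟩ := blk_rels_of_mem_Sp hM
  constructor <;>
  · simp only [← transpose_conjM, conjM_Pm_eq, conjM_Qm_eq]
    simp only [Pm_eq, Qm_eq, transpose_smul, transpose_add, transpose_sub, Matrix.smul_mul,
      Matrix.mul_smul, add_mul, mul_add, sub_mul, mul_sub, smul_add, smul_sub, smul_smul,
      hAC, hBD, hAD, hDA]
    match_scalars <;> ring_nf <;> simp [I_sq]

end Symplectic

section Cayley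

variable {n m : ℕ} {W Ω : Mat n n ℂ}

lemma cayley_fst_mul_one_sub (hW : IsUnit (1 - W)) :
    (I • ((1 + W) * (1 - W)⁻¹)) * (1 - W) = I • (1 + W) := by
  rw [smul_mul, nonsing_inv_mul_cancel_right _ _ ((isUnit_iff_isUnit_det _).1 hW)]

lemma mul_add_mul_one_sub_of_cayley (hΩ : Ω * (1 - W) = I • (1 + W)) (X Y : Mat m n ℂ) :
    (X * Ω + Y) * (1 - W) = (I • X - Y) * W + (I • X + Y) := by
  rw [Matrix.add_mul, Matrix.mul_assoc, hΩ]
  simp only [Matrix.mul_smul, Matrix.mul_add, Matrix.mul_sub, Matrix.mul_one, Matrix.sub_mul,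
    Matrix.smul_mul]
  module

variable {M : Matrix (Fin n ⊕ Fin n) (Fin n ⊕ Fin n) ℝ}

lemma blkA_mul_add_blkB_mul_one_sub (hΩ : Ω * (1 - W) = I • (1 + W)) :
    (blkA M * Ω + blkB M) * (1 - W)
      = I • ((Pm M * W + Qm M) + (conjM (Qm M) * W + conjM (Pm M))) := by
  rw [mul_add_mul_one_sub_of_cayley hΩ, conjM_Pm_eq, conjM_Qm_eq, Pm_eq, Qm_eq]
  simp only [Matrix.smul_mul, Matrix.add_mul, Matrix.sub_mul, smul_add, smul_sub, smul_smul]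
  match_scalars <;> ring_nf <;> simp [I_sq]

lemma blkC_mul_add_blkD_mul_one_sub (hΩ : Ω * (1 - W) = I • (1 + W)) :
    (blkC M * Ω + blkD M) * (1 - W)
      = (conjM (Qm M) * W + conjM (Pm M)) - (Pm M * W + Qm M) := by
  rw [mul_add_mul_one_sub_of_cayley hΩ, conjM_Pm_eq, conjM_Qm_eq, Pm_eq, Qm_eq]
  simp only [Matrix.smul_mul, Matrix.add_mul, Matrix.sub_mul, smul_add, smul_sub, smul_smul]
  match_scalars <;> ring

lemma jAct_snd_numerator_mul_one_sub (hW : IsUnit (1 - W)) (hΩ : Ω * (1 - W) = I • (1 + W))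
    (η : Mat m n ℂ) (lam mu : Mat m n ℝ) :
    ((2 * I) • (η * (1 - W)⁻¹) + lam.map ofReal * Ω + mu.map ofReal) * (1 - W)
      = (2 * I) • (η + lamStar lam mu * W + muStar lam mu) := by
  rw [add_assoc, Matrix.add_mul, mul_add_mul_one_sub_of_cayley hΩ, smul_mul,
    nonsing_inv_mul_cancel_right _ _ ((isUnit_iff_isUnit_det _).1 hW), lamStar, muStar]
  simp only [Matrix.smul_mul, Matrix.add_mul, Matrix.sub_mul, smul_add, smul_sub, smul_smul]
  match_scalars <;> ring_nf <;> simp [I_sq]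

end Cayley

section Compatibility

variable {n m : ℕ} {M : Matrix (Fin n ⊕ Fin n) (Fin n ⊕ Fin n) ℝ} {W : Mat n n ℂ}

lemma isUnit_one_sub_of_mem_SiegelD (hW : W ∈ SiegelD n) : IsUnit (1 - W) :=
  isUnit_one_sub_of_posDef_one_sub_conjTranspose_mul_self (mem_SiegelD_iff.1 hW).2

lemma isUnit_denom_of_mem_SiegelD (hM : M ∈ Sp n) (hW : W ∈ SiegelD n) :
    IsUnit (conjM (Qm M) * W + conjM (Pm M)) :=
  (isDiskPair_Pm_Qm hM).isUnit_denom (mem_SiegelD_iff.1 hW).2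

lemma spAct_cayley (hM : M ∈ Sp n) (hW : W ∈ SiegelD n) :
    spAct M (I • ((1 + W) * (1 - W)⁻¹))
      = I • ((1 + (Pm M * W + Qm M) * (conjM (Qm M) * W + conjM (Pm M))⁻¹)
          * (1 - (Pm M * W + Qm M) * (conjM (Qm M) * W + conjM (Pm M))⁻¹)⁻¹) := by
  have hU := isUnit_one_sub_of_mem_SiegelD hW
  have hΩ := cayley_fst_mul_one_sub hU
  rw [spAct, mul_nonsing_inv_eq_of_mul_eq hU (blkA_mul_add_blkB_mul_one_sub hΩ)
      (blkC_mul_add_blkD_mul_one_sub hΩ),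
    one_add_mul_inv_mul_one_sub_mul_inv (isUnit_denom_of_mem_SiegelD hM hW),
    smul_mul]

lemma jAct_snd_cayley (hM : M ∈ Sp n) (hW : W ∈ SiegelD n) (η : Mat m n ℂ) (lam mu : Mat m n ℝ) :
    ((2 * I) • (η * (1 - W)⁻¹) + lam.map ofReal * (I • ((1 + W) * (1 - W)⁻¹)) + mu.map ofReal)
        * (blkC M * (I • ((1 + W) * (1 - W)⁻¹)) + blkD M)⁻¹
      = (2 * I) • ((η + lamStar lam mu * W + muStar lam mu)
          * (conjM (Qm M) * W + conjM (Pm M))⁻¹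
          * (1 - (Pm M * W + Qm M) * (conjM (Qm M) * W + conjM (Pm M))⁻¹)⁻¹) := by
  have hU := isUnit_one_sub_of_mem_SiegelD hW
  have hΩ := cayley_fst_mul_one_sub hU
  rw [mul_nonsing_inv_eq_of_mul_eq hU (jAct_snd_numerator_mul_one_sub hU hΩ η lam mu)
      (blkC_mul_add_blkD_mul_one_sub hΩ),
    mul_inv_mul_one_sub_mul_inv (isUnit_denom_of_mem_SiegelD hM hW),
    smul_mul]

end Compatibility

theorem jacobi_action_compatible_with_cayley (n m : ℕ)
    (g : GJ n m) (hg : g.1 ∈ Sp n) (p : Mat n n ℂ × Mat m n ℂ) (hp : p ∈ DJ n m) :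
    IsUnit (conjM (Qm g.1) * p.1 + conjM (Pm g.1))
    ∧ jActD g p ∈ DJ n m
    ∧ jAct g (cayley p) = cayley (jActD g p) := by
  exact ⟨isUnit_denom_of_mem_SiegelD hg hp, (isDiskPair_Pm_Qm hg).mobius_mem_SiegelD hp,
    Prod.ext (spAct_cayley hg hp) (jAct_snd_cayley hg hp p.2 g.2.1 g.2.2.1)⟩
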